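/- Let n, μ, k ∈ ℕ and let a : Fin μ → Fin n → ℝ be a weight matrix. Suppose that for every nonempty subset S ⊆ Fin n with |S| ≤ 2k there exists a right node i ∈ Fin μ that is an S-leaf. Then the measurement map is injective on k-sparse vectors: if x, x' : Fin n → ℝ each have at most k nonzero coordinates and ∑_j (a i j)·(x j) = ∑_j (a i j)·(x' j) for every i ∈ Fin μ, then x = x'. -/
import Mathlib


/-- A right node `i` is an `S`-leaf for the weight matrix `a` if exactly one
`j ∈ S` satisfies `a i j ≠ 0`. -/
def IsLeaf {n μ : ℕ} (a : Fin μ → Fin n → ℝ) (S : Finset (Fin n)) (i : Fin μ) : Prop :=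
  ∃! j : Fin n, j ∈ S ∧ a i j ≠ 0

/-- If every nonempty subset `S ⊆ Fin n` with `|S| ≤ 2k` has an `S`-leaf right node,
then the measurement map `x ↦ (∑_j (a i j)·(x j))_i` is injective on `k`-sparse
vectors. -/
theorem measurements_injective_on_sparse (n μ k : ℕ) (a : Fin μ → Fin n → ℝ)
    (hleaf : ∀ S : Finset (Fin n), S.Nonempty → S.card ≤ 2 * k →
      ∃ i : Fin μ, IsLeaf a S i)
    (x x' : Fin n → ℝ)
    (hx : (Finset.univ.filter fun j => x j ≠ 0).card ≤ k)
    (hx' : (Finset.univ.filter fun j => x' j ≠ 0).card ≤ k)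
    (hmeas : ∀ i : Fin μ, ∑ j, a i j * x j = ∑ j, a i j * x' j) :
    x = x' := by
  set d : Fin n → ℝ := fun j => x j - x' j with hd
  set S : Finset (Fin n) := Finset.univ.filter fun j => d j ≠ 0 with hS
  by_cases hne : S.Nonempty
  · exfalso
    have hsub : S ⊆ (Finset.univ.filter fun j => x j ≠ 0) ∪
        (Finset.univ.filter fun j => x' j ≠ 0) := by
      intro j hj
      simp only [hS, Finset.mem_filter, Finset.mem_univ, true_and] at hj
      simp only [Finset.mem_union, Finset.mem_filter, Finset.mem_univ, true_and]
      by_contra hc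
      push_neg at hc
      simp [hd, hc.1, hc.2] at hj
    have hcard : S.card ≤ 2 * k := by
      calc S.card ≤ _ := Finset.card_le_card hsub
        _ ≤ _ + _ := Finset.card_union_le _ _
        _ ≤ 2 * k := by omega
    obtain ⟨i, j0, ⟨hj0S, hj0⟩, huniq⟩ := hleaf S hne hcard
    have hzero : ∑ j, a i j * d j = 0 := by
      have := hmeas i
      simp only [hd, mul_sub, Finset.sum_sub_distrib]
      linarith [hmeas i]
    have : ∑ j, a i j * d j = a i j0 * d j0 := by
      rw [Finset.sum_eq_single j0]
      · intro b _ hb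
        by_cases hbS : b ∈ S
        · have : a i b = 0 := by
            by_contra hab
            exact hb (huniq b ⟨hbS, hab⟩)
          simp [this]
        · have : d b = 0 := by
            by_contra hdb
            exact hbS (by simp [hS, hdb])
          simp [this]
      · intro h; simp at h
    have hd0 : d j0 ≠ 0 := by
      simp only [hS, Finset.mem_filter] at hj0S
      exact hj0S.2
    exact (mul_ne_zero hj0 hd0) (this ▸ hzero)
  · funext j
    have : d j = 0 := by
      by_contra h
      exact hne ⟨j, by simp [hS, h]⟩
    simpa [hd, sub_eq_zero] using this
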